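/- Let \widetilde{H} = \mathbb{C} Y_\infty be the vector space spanned by planar binary trees, equipped with the associative 'over' product t/s and the co-product \Delta^\alpha and co-action \delta^\alpha defined recursively by \Delta^\alpha(|) = | \otimes |, \Delta^\alpha V(r) = | \otimes V(r) + \delta^\alpha V(r), \Delta^\alpha(r \vee s) = \Delta^\alpha(r) / \Delta^\alpha(V(s)), \delta^\alpha(|) = |\otimes|, \delta^\alpha V(r) = (V \otimes id)\delta^\alpha(r), \delta^\alpha(r\vee s) = \Delta^\alpha(r)/\delta^\alpha(V(s)). Let t_n = \sum_{|t|=n} t be the sum of all planar binary trees with n internal vertices. Then \Delta^\alpha(t_n) = \sum_{k=0}^{n} t_k \otimes Q_{n-k}^{(k)}(t) and \delta^\alpha(t_n) = \sum_{k=0}^{n} t_k \otimes Q_{n-k}^{(k-1)}(t), where Q_m^{(n)}(t) is the polynomial Q_m^{(n)} evaluated at the elements t_1, t_2, \ldots with the over product and t_0 = |. -/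

import Mathlib

noncomputable section

/-- Rooted planar binary trees. -/
inductive PBT : Type
  | leaf : PBT
  | node : PBT → PBT → PBT
deriving DecidableEq

/-- The number of internal vertices of a planar binary tree. -/
def PBT.size : PBT → ℕ
  | .leaf => 0
  | .node l r => l.size + r.size + 1

/-- `over t s = t / s`: grafting of the root of `t` on the left-most leaf of `s`. -/
def overT : PBT → PBT → PBT
  | t, .leaf => t
  | t, .node l r => .node (overT t l) r

theorem over_assoc : ∀ t s u : PBT, overT (overT t s) u = overT t (overT s u)
  | _, _, .leaf => rfl
  | t, s, .node l r => by simp [overT, over_assoc t s l]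

theorem leaf_over : ∀ s : PBT, overT .leaf s = s
  | .leaf => rfl
  | .node l r => by simp [overT, leaf_over l]

/-- Planar binary trees form a monoid under the `over` product, with unit the root tree `|`. -/
instance : Monoid PBT where
  mul := overT
  one := .leaf
  mul_assoc := over_assoc
  one_mul := leaf_over
  mul_one := fun _ => rfl

/-- The finite set `Y_n` of planar binary trees with `n` internal vertices. -/
def treesOf : ℕ → Finset PBT
  | 0 => {PBT.leaf}
  | n + 1 =>
    (Finset.range (n + 1)).attach.biUnion fun i =>
      ((treesOf i.1) ×ˢ (treesOf (n - i.1))).image fun p => PBT.node p.1 p.2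
decreasing_by
  all_goals
    have := i.2
    simp only [Finset.mem_range] at this
    omega

/-- `H̃ = ℂ Y_∞`, the vector space spanned by planar binary trees, as an algebra with the
`over` product: the monoid algebra of the monoid of planar binary trees. -/
abbrev HT : Type := MonoidAlgebra ℂ PBT

/-- `t_n`, the sum of all planar binary trees with `n` internal vertices. -/
def Tn (n : ℕ) : HT := ∑ t ∈ treesOf n, MonoidAlgebra.of ℂ PBT t

/-- `Q_m^{(k-1)}(t)`: the polynomial `Qt k m = ∑_{j_1+⋯+j_k = m} t_{j_1} / ⋯ / t_{j_k}`
(product = over product in `H̃`), so `Qt (n+1) m = Q_m^{(n)}(t)` and `Qt 0 m = δ_{m,0}`. -/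
def Qt (k m : ℕ) : HT :=
  ∑ j ∈ Finset.Nat.antidiagonalTuple k m, (List.ofFn fun i => Tn (j i)).prod

/-- The linear map `V : H̃ → H̃` induced by `V(t) = | ∨ t` on trees. -/
def Vlin : HT →ₗ[ℂ] HT :=
  MonoidAlgebra.mapDomainLinearMap ℂ ℂ (fun t : PBT => PBT.node .leaf t)

open TensorProduct in
/-- `Dd t = (Δ^α t, δ^α t)`: the co-product and co-action of `H̃` on the basis trees, defined
by the simultaneous recursion `Δ^α(|) = δ^α(|) = | ⊗ |`,
`Δ^α(r ∨ s) = Δ^α(r) / Δ^α(V(s))` with `Δ^α(V(s)) = | ⊗ V(s) + δ^α(V(s))`,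
`δ^α(r ∨ s) = Δ^α(r) / δ^α(V(s))` with `δ^α(V(s)) = (V ⊗ id)(δ^α(s))`. -/
def Dd : PBT → (HT ⊗[ℂ] HT) × (HT ⊗[ℂ] HT)
  | .leaf => (1, 1)
  | .node r s =>
    ((Dd r).1 * ((1 : HT) ⊗ₜ[ℂ] (MonoidAlgebra.of ℂ PBT (PBT.node .leaf s)) +
        (TensorProduct.map Vlin LinearMap.id) (Dd s).2),
     (Dd r).1 * (TensorProduct.map Vlin LinearMap.id) (Dd s).2)


/-!
Every tree with `n + 1` internal vertices is uniquely `r ∨ s = r / V(s)` with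
`|r| + |s| = n`. Hence `t_{n+1} = ∑_{a+b=n} t_a / V(t_b)`, and, the recursion defining
`(Δ^α, δ^α)` being bilinear in `(Δ^α r, δ^α s)`, the sums of `(Δ^α t, δ^α t)` over `Y_n`
satisfy a recursion in `n`.
The right-hand sides satisfy the same recursion: with `T = ∑ tₙ Xⁿ` one has
`Q_m^{(k-1)}(t) = [Xᵐ] Tᵏ`, so the `Q`'s multiply by convolution, and `T = 1 + X T V(T)` gives
`Q_{m+1}^{(k)} = Q_{m+1}^{(k-1)} + ∑_{a+b=m} Q_a^{(k)} / V(t_b)`.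
-/

open Finset TensorProduct PowerSeries

theorem Finset.Nat.sum_antidiagonalTuple_succ {M : Type*} [AddCommMonoid M] (k n : ℕ)
    (f : (Fin (k + 1) → ℕ) → M) :
    ∑ j ∈ antidiagonalTuple (k + 1) n, f j =
      ∑ p ∈ antidiagonal n, ∑ j ∈ antidiagonalTuple k p.2, f (Fin.cons p.1 j) := by
  rw [sum_sigma']
  refine sum_nbij' (fun j => ⟨(j 0, n - j 0), Fin.tail j⟩) (fun x => Fin.cons x.1.1 x.2)
    ?_ ?_ ?_ ?_ ?_
  · intro j hj
    simp only [mem_antidiagonalTuple, mem_sigma,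
      HasAntidiagonal.mem_antidiagonal] at hj ⊢
    rw [Fin.sum_univ_succ] at hj
    exact ⟨by omega, by simp only [Fin.tail]; omega⟩
  · rintro ⟨⟨a, b⟩, j⟩ hx
    simp only [mem_antidiagonalTuple, mem_sigma,
      HasAntidiagonal.mem_antidiagonal] at hx ⊢
    rw [Fin.sum_cons, hx.2, hx.1]
  · intro j _
    exact Fin.cons_self_tail j
  · rintro ⟨⟨a, b⟩, j⟩ hx
    simp only [mem_sigma, HasAntidiagonal.mem_antidiagonal] at hx
    simp only [Fin.cons_zero, Fin.tail_cons, ← hx.1, Nat.add_sub_cancel_left]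
  · intro j _
    rw [Fin.cons_self_tail]

theorem Finset.Nat.sum_antidiagonal_antidiagonal_fst {M : Type*} [AddCommMonoid M] (n : ℕ)
    (f : ℕ → ℕ → ℕ → M) :
    ∑ p ∈ antidiagonal n, ∑ q ∈ antidiagonal p.1, f q.1 q.2 p.2 =
      ∑ p ∈ antidiagonal n, ∑ q ∈ antidiagonal p.2, f p.1 q.1 q.2 := by
  rw [sum_sigma', sum_sigma']
  refine sum_nbij' (fun x => ⟨(x.2.1, x.2.2 + x.1.2), (x.2.2, x.1.2)⟩)
    (fun x => ⟨(x.1.1 + x.2.1, x.2.2), (x.1.1, x.2.1)⟩) ?_ ?_ ?_ ?_ ?_ <;>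
    rintro ⟨⟨i, j⟩, a, b⟩ hx <;>
    simp only [mem_sigma, HasAntidiagonal.mem_antidiagonal, and_true] at hx ⊢
  · omega
  · omega
  · obtain ⟨rfl, rfl⟩ := hx; rfl
  · obtain ⟨rfl, rfl⟩ := hx; rfl

theorem Finset.Nat.sum_antidiagonal_mul_sum_antidiagonal {R : Type*}
    [NonUnitalNonAssocSemiring R] (n : ℕ) (F G : ℕ → ℕ → R) :
    ∑ p ∈ antidiagonal n,
        (∑ q ∈ antidiagonal p.1, F q.1 q.2) * ∑ q ∈ antidiagonal p.2, G q.1 q.2 =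
      ∑ p ∈ antidiagonal n, ∑ q ∈ antidiagonal p.1, ∑ r ∈ antidiagonal p.2,
        F q.1 r.1 * G q.2 r.2 := by
  simp only [sum_mul_sum]
  rw [sum_sigma', sum_sigma', sum_sigma', sum_sigma']
  refine sum_nbij'
    (fun x => ⟨⟨(x.1.2.1 + x.2.1, x.1.2.2 + x.2.2), (x.1.2.1, x.2.1)⟩, (x.1.2.2, x.2.2)⟩)
    (fun x => ⟨⟨(x.1.2.1 + x.2.1, x.1.2.2 + x.2.2), (x.1.2.1, x.2.1)⟩, (x.1.2.2, x.2.2)⟩)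
    ?_ ?_ ?_ ?_ ?_ <;>
    rintro ⟨⟨⟨i, j⟩, a, b⟩, c, e⟩ hx <;>
    simp only [mem_sigma, HasAntidiagonal.mem_antidiagonal, and_true] at hx ⊢
  · omega
  · omega
  · obtain ⟨⟨-, rfl⟩, rfl⟩ := hx; rfl
  · obtain ⟨⟨-, rfl⟩, rfl⟩ := hx; rfl

theorem PBT.size_eq_of_mem_treesOf : ∀ {n : ℕ} {t : PBT}, t ∈ treesOf n → t.size = n
  | 0, t, ht => by
    rw [treesOf, mem_singleton] at ht
    rw [ht, PBT.size]
  | n + 1, t, ht => by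
    rw [treesOf] at ht
    simp only [mem_biUnion, mem_attach, mem_image, mem_product, true_and] at ht
    obtain ⟨⟨i, hi⟩, ⟨r, s⟩, ⟨hr, hs⟩, rfl⟩ := ht
    have hi_lt := mem_range.1 hi
    simp only [PBT.size, size_eq_of_mem_treesOf hr, size_eq_of_mem_treesOf hs]
    omega

theorem sum_treesOf_succ {M : Type*} [AddCommMonoid M] (n : ℕ) (f : PBT → M) :
    ∑ t ∈ treesOf (n + 1), f t =
      ∑ p ∈ antidiagonal n, ∑ r ∈ treesOf p.1, ∑ s ∈ treesOf p.2, f (PBT.node r s) := by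
  have hdisj :
      (↑(range (n + 1)).attach : Set { i // i ∈ range (n + 1) }).PairwiseDisjoint fun i =>
        (treesOf i.1 ×ˢ treesOf (n - i.1)).image fun p => PBT.node p.1 p.2 := by
    intro i _ j _ hij
    simp only [Function.onFun, disjoint_left, mem_image, mem_product]
    rintro _ ⟨⟨r, s⟩, ⟨hr, -⟩, rfl⟩ ⟨⟨r', s'⟩, ⟨hr', -⟩, h⟩
    cases h
    exact hij (Subtype.ext ((PBT.size_eq_of_mem_treesOf hr).symm.trans
      (PBT.size_eq_of_mem_treesOf hr')))
  rw [treesOf, sum_biUnion hdisj, sum_attach (range (n + 1)) fun i =>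
      ∑ t ∈ (treesOf i ×ˢ treesOf (n - i)).image fun p => PBT.node p.1 p.2, f t,
    Nat.sum_antidiagonal_eq_sum_range_succ fun a b =>
      ∑ r ∈ treesOf a, ∑ s ∈ treesOf b, f (PBT.node r s)]
  refine sum_congr rfl fun i _ => ?_
  rw [sum_image fun p _ q _ h => by cases p; cases q; simpa using h, sum_product]

theorem Vlin_of (t : PBT) :
    Vlin (MonoidAlgebra.of ℂ PBT t) = MonoidAlgebra.of ℂ PBT (PBT.node .leaf t) :=
  MonoidAlgebra.mapDomainLinearMap_single (R := ℂ) _ _ _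

theorem Tn_zero : Tn 0 = 1 := by
  rw [Tn, treesOf, sum_singleton]
  exact map_one (MonoidAlgebra.of ℂ PBT)

theorem Tn_succ (n : ℕ) : Tn (n + 1) = ∑ p ∈ antidiagonal n, Tn p.1 * Vlin (Tn p.2) := by
  simp only [Tn, sum_treesOf_succ, map_sum, Vlin_of, sum_mul_sum, ← map_mul]
  rfl

def tnSeries : PowerSeries HT := PowerSeries.mk Tn

def vTnSeries : PowerSeries HT := PowerSeries.mk fun n => Vlin (Tn n)

theorem coeff_tnSeries (n : ℕ) : coeff n tnSeries = Tn n := coeff_mk _ _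

theorem coeff_vTnSeries (n : ℕ) : coeff n vTnSeries = Vlin (Tn n) := coeff_mk _ _

theorem tnSeries_eq : tnSeries = 1 + X * (tnSeries * vTnSeries) := by
  refine PowerSeries.ext fun n => ?_
  cases n with
  | zero => simp [coeff_tnSeries, Tn_zero]
  | succ n =>
    rw [map_add, coeff_succ_X_mul, coeff_one, if_neg n.succ_ne_zero, zero_add, coeff_mul,
      coeff_tnSeries, Tn_succ]
    simp only [coeff_tnSeries, coeff_vTnSeries]

theorem Qt_succ (k m : ℕ) : Qt (k + 1) m = ∑ p ∈ antidiagonal m, Tn p.1 * Qt k p.2 := by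
  simp only [Qt, Nat.sum_antidiagonalTuple_succ, List.ofFn_succ, List.prod_cons, Fin.cons_zero,
    Fin.cons_succ, mul_sum]

theorem coeff_tnSeries_pow (k m : ℕ) : coeff m (tnSeries ^ k) = Qt k m := by
  induction k generalizing m with
  | zero => cases m <;> simp [Qt, coeff_one]
  | succ k ih => simp only [pow_succ', coeff_mul, ih, coeff_tnSeries, Qt_succ]

theorem Qt_zero_right (k : ℕ) : Qt k 0 = 1 := by
  rw [← coeff_tnSeries_pow, coeff_zero_eq_constantCoeff_apply, map_pow,
    ← coeff_zero_eq_constantCoeff_apply, coeff_tnSeries, Tn_zero, one_pow]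

theorem Qt_zero_succ (m : ℕ) : Qt 0 (m + 1) = 0 := by
  rw [← coeff_tnSeries_pow, pow_zero, coeff_one, if_neg m.succ_ne_zero]

theorem Qt_add (k l m : ℕ) : Qt (k + l) m = ∑ p ∈ antidiagonal m, Qt k p.1 * Qt l p.2 := by
  simp only [← coeff_tnSeries_pow, pow_add, coeff_mul]

theorem Qt_succ_succ (k m : ℕ) :
    Qt (k + 1) (m + 1) =
      Qt k (m + 1) + ∑ p ∈ antidiagonal m, Qt (k + 1) p.1 * Vlin (Tn p.2) := by
  have h : tnSeries ^ (k + 1) = tnSeries ^ k + X * (tnSeries ^ (k + 1) * vTnSeries) :=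
    calc tnSeries ^ (k + 1) = tnSeries ^ k * (1 + X * (tnSeries * vTnSeries)) := by
          rw [pow_succ, ← tnSeries_eq]
      _ = tnSeries ^ k + X * (tnSeries ^ (k + 1) * vTnSeries) := by
          rw [mul_add, mul_one, (commute_X (tnSeries ^ k)).left_comm,
            ← mul_assoc (tnSeries ^ k), ← pow_succ]
  rw [← coeff_tnSeries_pow (k + 1), h, map_add, coeff_succ_X_mul, coeff_mul]
  simp only [coeff_tnSeries_pow, coeff_vTnSeries]

/-- The right-hand sides of the two identities, summed over `k + (n - k) = n`. -/
def coproductTn (n : ℕ) : HT ⊗[ℂ] HT :=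
  ∑ p ∈ antidiagonal n, Tn p.1 ⊗ₜ[ℂ] Qt (p.1 + 1) p.2

def coactionTn (n : ℕ) : HT ⊗[ℂ] HT := ∑ p ∈ antidiagonal n, Tn p.1 ⊗ₜ[ℂ] Qt p.1 p.2

theorem map_Vlin_coactionTn (n : ℕ) :
    TensorProduct.map Vlin LinearMap.id (coactionTn n) =
      ∑ p ∈ antidiagonal n, Vlin (Tn p.1) ⊗ₜ[ℂ] Qt p.1 p.2 := by
  simp only [coactionTn, map_sum, map_tmul, LinearMap.id_apply]

theorem coactionTn_succ (n : ℕ) :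
    coactionTn (n + 1) = ∑ p ∈ antidiagonal n,
      coproductTn p.1 * TensorProduct.map Vlin LinearMap.id (coactionTn p.2) := by
  have hsum : ∀ p ∈ antidiagonal n, ∑ q ∈ antidiagonal p.1, ∑ r ∈ antidiagonal p.2,
      (Tn q.1 ⊗ₜ[ℂ] Qt (q.1 + 1) r.1) * (Vlin (Tn q.2) ⊗ₜ[ℂ] Qt q.2 r.2) =
        Tn (p.1 + 1) ⊗ₜ[ℂ] Qt (p.1 + 1) p.2 := by
    intro p _
    calc _ = ∑ q ∈ antidiagonal p.1, (Tn q.1 * Vlin (Tn q.2)) ⊗ₜ[ℂ] Qt (p.1 + 1) p.2 := by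
          refine sum_congr rfl fun q hq => ?_
          simp only [Algebra.TensorProduct.tmul_mul_tmul, ← tmul_sum, ← Qt_add,
            ← HasAntidiagonal.mem_antidiagonal.1 hq, add_right_comm]
      _ = _ := by rw [← sum_tmul, Tn_succ]
  rw [coactionTn, Nat.sum_antidiagonal_succ, Qt_zero_succ, tmul_zero, zero_add]
  simp only [coproductTn, map_Vlin_coactionTn]
  rw [Nat.sum_antidiagonal_mul_sum_antidiagonal n (fun a b => Tn a ⊗ₜ[ℂ] Qt (a + 1) b)
    fun c e => Vlin (Tn c) ⊗ₜ[ℂ] Qt c e]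
  exact (sum_congr rfl hsum).symm

theorem coproductTn_succ (n : ℕ) :
    coproductTn (n + 1) = ∑ p ∈ antidiagonal n, coproductTn p.1 *
      ((1 : HT) ⊗ₜ[ℂ] Vlin (Tn p.2) +
        TensorProduct.map Vlin LinearMap.id (coactionTn p.2)) := by
  have hV : ∑ p ∈ antidiagonal n, coproductTn p.1 * ((1 : HT) ⊗ₜ[ℂ] Vlin (Tn p.2)) =
      ∑ p ∈ antidiagonal n,
        Tn p.1 ⊗ₜ[ℂ] ∑ q ∈ antidiagonal p.2, Qt (p.1 + 1) q.1 * Vlin (Tn q.2) := by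
    simp only [coproductTn, sum_mul, Algebra.TensorProduct.tmul_mul_tmul, mul_one, tmul_sum]
    exact Nat.sum_antidiagonal_antidiagonal_fst n
      fun a b q => Tn a ⊗ₜ[ℂ] (Qt (a + 1) b * Vlin (Tn q))
  simp only [mul_add, sum_add_distrib, hV, ← coactionTn_succ]
  rw [coproductTn, coactionTn, Nat.sum_antidiagonal_succ', Nat.sum_antidiagonal_succ',
    Qt_zero_right, Qt_zero_right]
  simp only [Qt_succ_succ, tmul_add, sum_add_distrib]
  abel

theorem sum_Dd_node (R S : Finset PBT) :
    ∑ r ∈ R, ∑ s ∈ S, Dd (.node r s) =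
      ((∑ r ∈ R, (Dd r).1) *
          ((1 : HT) ⊗ₜ[ℂ] Vlin (∑ s ∈ S, MonoidAlgebra.of ℂ PBT s) +
            TensorProduct.map Vlin LinearMap.id (∑ s ∈ S, (Dd s).2)),
        (∑ r ∈ R, (Dd r).1) * TensorProduct.map Vlin LinearMap.id (∑ s ∈ S, (Dd s).2)) := by
  simp only [Dd, ← prod_mk_sum, map_sum, Vlin_of, tmul_sum, ← sum_add_distrib, sum_mul_sum]

theorem sum_treesOf_Dd (n : ℕ) : ∑ t ∈ treesOf n, Dd t = (coproductTn n, coactionTn n) := by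
  induction n using Nat.strong_induction_on with
  | _ n ih =>
  cases n with
  | zero =>
    simp [treesOf, Dd, coproductTn, coactionTn, Tn_zero, Qt_zero_right,
      Algebra.TensorProduct.one_def]
  | succ n =>
    have hnode : ∀ p ∈ antidiagonal n,
        ∑ r ∈ treesOf p.1, ∑ s ∈ treesOf p.2, Dd (.node r s) =
          (coproductTn p.1 * ((1 : HT) ⊗ₜ[ℂ] Vlin (Tn p.2) +
              TensorProduct.map Vlin LinearMap.id (coactionTn p.2)),
            coproductTn p.1 * TensorProduct.map Vlin LinearMap.id (coactionTn p.2)) := by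
      intro p hp
      have hp_sum := HasAntidiagonal.mem_antidiagonal.1 hp
      rw [sum_Dd_node, ← Tn, ← Prod.fst_sum, ← Prod.snd_sum, ih p.1 (by omega),
        ih p.2 (by omega)]
    rw [sum_treesOf_succ, sum_congr rfl hnode, ← prod_mk_sum, coproductTn_succ,
      coactionTn_succ]

open TensorProduct in
/-- `Δ^α(t_n) = ∑_{k=0}^n t_k ⊗ Q_{n-k}^{(k)}(t)` and
`δ^α(t_n) = ∑_{k=0}^n t_k ⊗ Q_{n-k}^{(k-1)}(t)`. -/
theorem coproduct_coaction_tn (n : ℕ) :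
    (∑ t ∈ treesOf n, (Dd t).1) =
      ∑ k ∈ Finset.range (n + 1), Tn k ⊗ₜ[ℂ] Qt (k + 1) (n - k) ∧
    (∑ t ∈ treesOf n, (Dd t).2) =
      ∑ k ∈ Finset.range (n + 1), Tn k ⊗ₜ[ℂ] Qt k (n - k) := by
  rw [← Prod.fst_sum, ← Prod.snd_sum, sum_treesOf_Dd]
  exact ⟨Nat.sum_antidiagonal_eq_sum_range_succ (fun a b => Tn a ⊗ₜ[ℂ] Qt (a + 1) b) n,
    Nat.sum_antidiagonal_eq_sum_range_succ (fun a b => Tn a ⊗ₜ[ℂ] Qt a b) n⟩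

end
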